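/- arXiv:2312.05587 — 2 statements merged into one kernel-verified Lean document; each statement's English description precedes it below -/
import Mathlib

section
/- Let g ∈ ℤ_p[[t]] and let ζ be a primitive p^n-th root of unity in \bar{ℚ}_p (n ≥ 1). Then the series g(ζ - 1) converges in ℚ_p(ζ), and the product ∏_{ζ^{p^n}=1} g(ζ-1) (over all p^n-th roots of unity, including ζ = 1) lies in ℤ_p. -/
/-!
A `p`-power root of unity `ξ` satisfies `‖ξ - 1‖ < 1`: by induction on the exponent, since
`(x + 1) ^ p - x ^ p - 1` is divisible by `p`. Hence the series converges. For the truncations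
`P` of `g`, the product of the `P (ξ - 1)` over the `p ^ n`-th roots of unity is the resultant of
`X ^ (p ^ n) - 1` and `P (X - 1)`, so it lies in `ℤ_[p]`; these products converge to the product
of the `g (ξ - 1)`, and `ℤ_[p]` is closed in `K`.
-/

/-- Evaluation of `g ∈ ℤ_p[[t]]` at `x` in a `ℚ_p`-algebra, as the sum of the series. -/
noncomputable def psEval (p : ℕ) [Fact p.Prime] (K : Type*) [NormedField K]
    [Algebra ℚ_[p] K] (g : PowerSeries ℤ_[p]) (x : K) : K :=
  ∑' i : ℕ, algebraMap ℚ_[p] K ((PowerSeries.coeff i g : ℤ_[p]) : ℚ_[p]) * x ^ i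

open Polynomial Filter Topology

theorem norm_add_one_pow_prime_sub_le {R : Type*} [NormedCommRing R] [NormOneClass R]
    [IsUltrametricDist R] {p : ℕ} (hp : p.Prime) {x : R} (hx : ‖x‖ ≤ 1) :
    ‖(x + 1) ^ p - x ^ p - 1‖ ≤ ‖(p : R)‖ := by
  rw [add_pow_prime_eq' hp, one_pow, show ∀ a b c : R, a + b + c - a - b = c by intros; ring]
  refine (norm_mul_le _ _).trans (mul_le_of_le_one_right (norm_nonneg _) ?_)
  refine IsUltrametricDist.norm_sum_le_of_forall_le_of_nonneg zero_le_one fun k _ => ?_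
  rw [one_pow, mul_one]
  refine (norm_mul_le _ _).trans (mul_le_one₀ ?_ (norm_nonneg _)
    (IsUltrametricDist.norm_natCast_le_one R _))
  exact (norm_pow_le _ _).trans (pow_le_one₀ (norm_nonneg _) hx)

theorem summable_mul_pow_of_norm_le_one {R : Type*} [NormedRing R] [NormOneClass R]
    [CompleteSpace R] {a : ℕ → R} (ha : ∀ i, ‖a i‖ ≤ 1) {x : R} (hx : ‖x‖ < 1) :
    Summable fun i => a i * x ^ i :=
  .of_norm_bounded (summable_geometric_of_lt_one (norm_nonneg x) hx) fun i =>
    (norm_mul_le _ _).trans <|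
      (mul_le_of_le_one_left (norm_nonneg _) (ha i)).trans (norm_pow_le _ _)

theorem norm_sub_one_lt_one_of_pow_prime_pow_eq_one {K : Type*} [NormedField K]
    [IsUltrametricDist K] {p : ℕ} (hp : p.Prime) (hpK : ‖(p : K)‖ < 1) {m : ℕ} {ξ : K}
    (hξ : ξ ^ p ^ m = 1) : ‖ξ - 1‖ < 1 := by
  induction m generalizing ξ with
  | zero => simp_all
  | succ m ih =>
    have hξp : ‖ξ ^ p - 1‖ < 1 := ih (by rw [← pow_mul, ← pow_succ', hξ])
    have hξ1 : ‖ξ - 1‖ ≤ 1 := by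
      have : ‖ξ‖ = 1 :=
        (isOfFinOrder_iff_pow_eq_one.2 ⟨_, pow_pos hp.pos _, hξ⟩).norm_eq_one
      simpa [sub_eq_add_neg, this] using IsUltrametricDist.norm_add_le_max ξ (-1)
    have : ‖ξ - 1‖ ^ p < 1 := calc
      ‖ξ - 1‖ ^ p = ‖(ξ ^ p - 1) + -((ξ - 1 + 1) ^ p - (ξ - 1) ^ p - 1)‖ := by
        rw [sub_add_cancel, ← norm_pow]
        congr 1
        ring
      _ ≤ max ‖ξ ^ p - 1‖ ‖-((ξ - 1 + 1) ^ p - (ξ - 1) ^ p - 1)‖ :=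
        IsUltrametricDist.norm_add_le_max _ _
      _ < 1 := by
        rw [norm_neg]
        exact max_lt hξp ((norm_add_one_pow_prime_sub_le hp hξ1).trans_lt hpK)
    exact (pow_lt_one_iff_of_nonneg (norm_nonneg _) hp.ne_zero).1 this

theorem prod_nthRoots_eval₂_eq_resultant {R K : Type*} [CommRing R] [Field K] (f : R →+* K)
    {N : ℕ} (hN : 0 < N) {ζ : K} (hζ : IsPrimitiveRoot ζ N) (G : R[X]) :
    ((nthRoots N (1 : K)).map fun ξ => G.eval₂ f ξ).prod =
      f (resultant (X ^ N - 1) G N G.natDegree) := by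
  have h := resultant_eq_prod_eval (X ^ N - C (1 : K)) (G.map f) G.natDegree natDegree_map_le
    (X_pow_sub_one_splits hζ)
  rw [natDegree_X_pow_sub_C, leadingCoeff_X_pow_sub_C hN, one_pow, one_mul] at h
  rw [← resultant_map_map, show (X ^ N - 1 : R[X]).map f = X ^ N - C 1 by simp, h, nthRoots]
  simp only [eval_map]

theorem prod_nthRoots_eval₂_sub_one_eq_resultant {R K : Type*} [CommRing R] [Field K]
    (f : R →+* K) {N : ℕ} (hN : 0 < N) {ζ : K} (hζ : IsPrimitiveRoot ζ N) (P : R[X]) :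
    ((nthRoots N (1 : K)).map fun ξ => P.eval₂ f (ξ - 1)).prod =
      f (resultant (X ^ N - 1) (P.comp (X - 1)) N (P.comp (X - 1)).natDegree) := by
  simp [← prod_nthRoots_eval₂_eq_resultant f hN hζ, eval₂_comp]

section PadicAlgebra

variable (p : ℕ) [Fact p.Prime] (K : Type*) [NormedField K] [Algebra ℚ_[p] K]

noncomputable def padicIntHom : ℤ_[p] →+* K :=
  (algebraMap ℚ_[p] K).comp PadicInt.Coe.ringHom

variable {p K} (hiso : ∀ x : ℚ_[p], ‖algebraMap ℚ_[p] K x‖ = ‖x‖)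
include hiso

theorem isometry_padicIntHom : Isometry (padicIntHom p K) :=
  AddMonoidHomClass.isometry_of_norm _ fun z => hiso z

variable [CompleteSpace K]

theorem summable_coeff_mul_pow (g : PowerSeries ℤ_[p]) {x : K} (hx : ‖x‖ < 1) :
    Summable fun i : ℕ =>
      algebraMap ℚ_[p] K ((PowerSeries.coeff i g : ℤ_[p]) : ℚ_[p]) * x ^ i :=
  summable_mul_pow_of_norm_le_one (fun i => by rw [hiso]; exact PadicInt.norm_le_one _) hx

theorem tendsto_eval₂_trunc_psEval (g : PowerSeries ℤ_[p]) {x : K} (hx : ‖x‖ < 1) :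
    Tendsto (fun m => (PowerSeries.trunc m g).eval₂ (padicIntHom p K) x) atTop
      (𝓝 (psEval p K g x)) := by
  simp only [PowerSeries.eval₂_trunc_eq_sum_range]
  exact (summable_coeff_mul_pow hiso g hx).hasSum.tendsto_sum_nat

end PadicAlgebra

theorem stmt15_general (p : ℕ) [Fact p.Prime] (n : ℕ)
    (K : Type*) [NormedField K] [CompleteSpace K] [IsUltrametricDist K]
    [Algebra ℚ_[p] K] (hiso : ∀ x : ℚ_[p], ‖algebraMap ℚ_[p] K x‖ = ‖x‖)
    (g : PowerSeries ℤ_[p]) (ζ : K) (hζ : IsPrimitiveRoot ζ (p ^ n)) :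
    Summable (fun i : ℕ =>
      algebraMap ℚ_[p] K ((PowerSeries.coeff i g : ℤ_[p]) : ℚ_[p]) * (ζ - 1) ^ i) ∧
    ∃ c : ℤ_[p],
      ((Polynomial.nthRoots (p ^ n) (1 : K)).map (fun ξ => psEval p K g (ξ - 1))).prod
        = algebraMap ℚ_[p] K (c : ℚ_[p]) := by
  have hp : p.Prime := Fact.out
  have hN : 0 < p ^ n := pow_pos hp.pos n
  have hpK : ‖(p : K)‖ < 1 := by
    rw [← map_natCast (algebraMap ℚ_[p] K), hiso, Padic.norm_p]
    exact inv_lt_one_of_one_lt₀ (mod_cast hp.one_lt)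
  have hroots (ξ : K) (hξ : ξ ∈ nthRoots (p ^ n) 1) : ‖ξ - 1‖ < 1 :=
    norm_sub_one_lt_one_of_pow_prime_pow_eq_one hp hpK ((mem_nthRoots hN).1 hξ)
  refine ⟨summable_coeff_mul_pow hiso g (hroots ζ ((mem_nthRoots hN).2 hζ.pow_eq_one)), ?_⟩
  have hlim := tendsto_multiset_prod (nthRoots (p ^ n) (1 : K))
    fun ξ hξ => tendsto_eval₂_trunc_psEval hiso g (hroots ξ hξ)
  have happrox (m : ℕ) : ((nthRoots (p ^ n) (1 : K)).map fun ξ =>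
      (PowerSeries.trunc m g).eval₂ (padicIntHom p K) (ξ - 1)).prod ∈
        Set.range (padicIntHom p K) :=
    ⟨_, (prod_nthRoots_eval₂_sub_one_eq_resultant _ hN hζ _).symm⟩
  obtain ⟨c, hc⟩ := (isometry_padicIntHom hiso).isClosedEmbedding.isClosed_range.mem_of_tendsto
    hlim (.of_forall happrox)
  exact ⟨c, hc.symm⟩

/-- For `g ∈ ℤ_p[[t]]` and `ζ` a primitive `p^n`-th root of unity (`n ≥ 1`) in a
complete ultrametric isometric extension `K` of `ℚ_p`, the series `g(ζ - 1)`
converges, and the product `∏_{ζ^{p^n}=1} g(ζ-1)` over all `p^n`-th roots of unity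
lies in `ℤ_p`. -/
theorem stmt15 (p : ℕ) [Fact p.Prime] (n : ℕ) (hn : 1 ≤ n)
    (K : Type*) [NormedField K] [CompleteSpace K] [IsUltrametricDist K]
    [Algebra ℚ_[p] K] (hiso : ∀ x : ℚ_[p], ‖algebraMap ℚ_[p] K x‖ = ‖x‖)
    (g : PowerSeries ℤ_[p]) (ζ : K) (hζ : IsPrimitiveRoot ζ (p ^ n)) :
    Summable (fun i : ℕ =>
      algebraMap ℚ_[p] K ((PowerSeries.coeff i g : ℤ_[p]) : ℚ_[p]) * (ζ - 1) ^ i) ∧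
    ∃ c : ℤ_[p],
      ((Polynomial.nthRoots (p ^ n) (1 : K)).map (fun ξ => psEval p K g (ξ - 1))).prod
        = algebraMap ℚ_[p] K (c : ℚ_[p]) :=
  stmt15_general p n K hiso g ζ hζ
end

section
/- Let M be a finitely generated torsion module over Λ = ℤ_p[[t]] and f ∈ Λ. If M/fM is finite and M[f] (the f-torsion submodule) is finite, then |M/fM| / |M[f]| depends only on the pseudo-isomorphism class of M; in particular, if M is pseudo-isomorphic to M', M/fM and M'/fM' are finite, and M[f], M'[f] are finite, then |M/fM|/|M[f]| = |M'/fM'|/|M'[f]|. -/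
/-!
Both products come from factoring the one map `φ ∘ f = f ∘ φ : M → M'` in two ways. For any
composite of linear maps, `|ker (v ∘ u)| |coker u| |coker v| = |coker (v ∘ u)| |ker u| |ker v|`,
from `|ker (v ∘ u)| = |ker u| |im u ∩ ker v|`, `|coker (v ∘ u)| = |Y / (im u + ker v)| |coker v|`
and the second isomorphism theorem. Since `Nat.card A = Nat.card N * Nat.card (A ⧸ N)` holds
even for infinite `A` (both sides are then `0`), none of this needs finiteness. Comparing the two
factorisations and cancelling the finite factor `|ker (φ ∘ f)| |coker φ|` gives the theorem.
-/

open LinearMap Submodule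

section

variable {R X Y Z : Type*} [Ring R] [AddCommGroup X] [Module R X] [AddCommGroup Y] [Module R Y]
  [AddCommGroup Z] [Module R Z]

theorem LinearMap.card_eq_card_ker_mul_card_range (g : X →ₗ[R] Y) :
    Nat.card X = Nat.card (ker g) * Nat.card (range g) := by
  rw [(ker g).card_eq_card_quotient_mul_card, Nat.card_congr g.quotKerEquivRange.toEquiv]

theorem Submodule.card_comap_subtype (P Q : Submodule R Y) :
    Nat.card (comap Q.subtype P) = Nat.card ↥(Q ⊓ P) := by
  rw [← map_comap_subtype]
  exact Nat.card_congr (equivMapOfInjective _ Q.injective_subtype _).toEquiv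

theorem Submodule.card_quotient_mul_card_inf (P Q : Submodule R Y) :
    Nat.card (Y ⧸ P) * Nat.card ↥(P ⊓ Q) = Nat.card (Y ⧸ (P ⊔ Q)) * Nat.card Q := by
  have hQ := (P.mkQ ∘ₗ Q.subtype).card_eq_card_ker_mul_card_range
  rw [ker_comp, ker_mkQ, card_comap_subtype, range_comp, range_subtype] at hQ
  rw [(map P.mkQ Q).card_eq_card_quotient_mul_card,
    Nat.card_congr (quotientQuotientEquivQuotientSup P Q).toEquiv, hQ, inf_comm]
  ring

theorem LinearMap.card_ker_comp (u : X →ₗ[R] Y) (v : Y →ₗ[R] Z) :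
    Nat.card (ker (v ∘ₗ u)) = Nat.card (ker u) * Nat.card ↥(range u ⊓ ker v) := by
  rw [(u.domRestrict (ker (v ∘ₗ u))).card_eq_card_ker_mul_card_range, ker_domRestrict,
    card_comap_subtype, inf_eq_right.mpr (ker_le_ker_comp u v), range_domRestrict, ker_comp,
    map_comap_eq]

theorem LinearMap.card_coker_comp (u : X →ₗ[R] Y) (v : Y →ₗ[R] Z) :
    Nat.card (Z ⧸ range (v ∘ₗ u))
      = Nat.card (Y ⧸ (range u ⊔ ker v)) * Nat.card (Z ⧸ range v) := by
  rw [← card_quotient_mul_card_quotient _ _ (range_comp_le_range u v)]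
  have e := ((range (v ∘ₗ u)).mkQ ∘ₗ v).quotKerEquivRange
  rw [ker_comp, ker_mkQ, range_comp u v, comap_map_eq, range_comp v] at e
  rw [range_comp u v, Nat.card_congr e.toEquiv]

theorem LinearMap.card_ker_comp_mul_card_coker (u : X →ₗ[R] Y) (v : Y →ₗ[R] Z) :
    Nat.card (ker (v ∘ₗ u)) * Nat.card (Y ⧸ range u) * Nat.card (Z ⧸ range v)
      = Nat.card (Z ⧸ range (v ∘ₗ u)) * Nat.card (ker u) * Nat.card (ker v) := by
  rw [card_ker_comp, card_coker_comp]
  calc Nat.card (ker u) * Nat.card ↥(range u ⊓ ker v) * Nat.card (Y ⧸ range u)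
        * Nat.card (Z ⧸ range v)
      = Nat.card (ker u) * (Nat.card (Y ⧸ range u) * Nat.card ↥(range u ⊓ ker v))
        * Nat.card (Z ⧸ range v) := by ring
    _ = Nat.card (ker u) * (Nat.card (Y ⧸ (range u ⊔ ker v)) * Nat.card (ker v))
        * Nat.card (Z ⧸ range v) := by rw [card_quotient_mul_card_inf]
    _ = _ := by ring

theorem LinearMap.card_coker_mul_card_ker_eq_of_comp_eq (φ : X →ₗ[R] Y) (g : X →ₗ[R] X)
    (g' : Y →ₗ[R] Y) (hcomm : φ ∘ₗ g = g' ∘ₗ φ) [Finite (ker φ)] [Finite (Y ⧸ range φ)]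
    [Finite (ker g)] :
    Nat.card (X ⧸ range g) * Nat.card (ker g')
      = Nat.card (Y ⧸ range g') * Nat.card (ker g) := by
  have h := card_ker_comp_mul_card_coker g φ
  have h' := card_ker_comp_mul_card_coker φ g'
  rw [← hcomm] at h'
  have hpos : 0 < Nat.card (ker (φ ∘ₗ g)) * Nat.card (Y ⧸ range φ) := by
    have : Finite ↥(range g ⊓ ker φ) := Finite.of_injective _ (inclusion_injective inf_le_right)
    rw [card_ker_comp]
    exact Nat.mul_pos (Nat.mul_pos Nat.card_pos Nat.card_pos) Nat.card_pos
  refine Nat.eq_of_mul_eq_mul_left hpos ?_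
  calc _ = Nat.card (ker (φ ∘ₗ g)) * Nat.card (X ⧸ range g) * Nat.card (Y ⧸ range φ)
        * Nat.card (ker g') := by ring
    _ = Nat.card (Y ⧸ range (φ ∘ₗ g)) * Nat.card (ker g) * Nat.card (ker φ)
        * Nat.card (ker g') := by rw [h]
    _ = Nat.card (Y ⧸ range (φ ∘ₗ g)) * Nat.card (ker φ) * Nat.card (ker g')
        * Nat.card (ker g) := by ring
    _ = Nat.card (ker (φ ∘ₗ g)) * Nat.card (Y ⧸ range φ) * Nat.card (Y ⧸ range g')
        * Nat.card (ker g) := by rw [h']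
    _ = _ := by ring

end

theorem Submodule.ideal_span_singleton_smul_top_eq_range {R M : Type*} [CommRing R]
    [AddCommGroup M] [Module R M] (r : R) :
    (Ideal.span {r} : Ideal R) • (⊤ : Submodule R M) = range (DistribSMul.toLinearMap R M r) := by
  rw [ideal_span_singleton_smul, pointwise_smul_def, map_top]

theorem stmt19_general (p : ℕ) [Fact p.Prime]
    (M M' : Type*) [AddCommGroup M] [AddCommGroup M']
    [Module (PowerSeries ℤ_[p]) M] [Module (PowerSeries ℤ_[p]) M']
    (f : PowerSeries ℤ_[p])
    (φ : M →ₗ[PowerSeries ℤ_[p]] M')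
    (hker : Finite (LinearMap.ker φ)) (hcoker : Finite (M' ⧸ LinearMap.range φ))
    (h₂ : Finite (Submodule.torsionBy (PowerSeries ℤ_[p]) M f)) :
    Nat.card (M ⧸ (Ideal.span {f} • (⊤ : Submodule (PowerSeries ℤ_[p]) M)))
        * Nat.card (Submodule.torsionBy (PowerSeries ℤ_[p]) M' f)
      = Nat.card (M' ⧸ (Ideal.span {f} • (⊤ : Submodule (PowerSeries ℤ_[p]) M')))
        * Nat.card (Submodule.torsionBy (PowerSeries ℤ_[p]) M f) := by
  have hcomm : φ ∘ₗ DistribSMul.toLinearMap _ M f = DistribSMul.toLinearMap _ M' f ∘ₗ φ :=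
    LinearMap.ext fun x => φ.map_smul f x
  rw [ideal_span_singleton_smul_top_eq_range, ideal_span_singleton_smul_top_eq_range]
  have : Finite (ker (DistribSMul.toLinearMap _ M f)) := h₂
  exact card_coker_mul_card_ker_eq_of_comp_eq φ _ _ hcomm

/-- The Herbrand-type quotient `|M/fM| / |M[f]|` for finitely generated torsion
`Λ = ℤ_p[[t]]`-modules is invariant under pseudo-isomorphism: if `φ : M → M'` is a
`Λ`-linear map with finite kernel and cokernel, and `M/fM`, `M[f]`, `M'/fM'`, `M'[f]`
are all finite, then `|M/fM| · |M'[f]| = |M'/fM'| · |M[f]|`. -/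
theorem stmt19 (p : ℕ) [Fact p.Prime]
    (M M' : Type*) [AddCommGroup M] [AddCommGroup M']
    [Module (PowerSeries ℤ_[p]) M] [Module (PowerSeries ℤ_[p]) M']
    [Module.Finite (PowerSeries ℤ_[p]) M] [Module.Finite (PowerSeries ℤ_[p]) M']
    (htor : Module.IsTorsion (PowerSeries ℤ_[p]) M)
    (htor' : Module.IsTorsion (PowerSeries ℤ_[p]) M')
    (f : PowerSeries ℤ_[p])
    (φ : M →ₗ[PowerSeries ℤ_[p]] M')
    (hker : Finite (LinearMap.ker φ)) (hcoker : Finite (M' ⧸ LinearMap.range φ))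
    (h₁ : Finite (M ⧸ (Ideal.span {f} • (⊤ : Submodule (PowerSeries ℤ_[p]) M))))
    (h₂ : Finite (Submodule.torsionBy (PowerSeries ℤ_[p]) M f))
    (h₁' : Finite (M' ⧸ (Ideal.span {f} • (⊤ : Submodule (PowerSeries ℤ_[p]) M'))))
    (h₂' : Finite (Submodule.torsionBy (PowerSeries ℤ_[p]) M' f)) :
    Nat.card (M ⧸ (Ideal.span {f} • (⊤ : Submodule (PowerSeries ℤ_[p]) M)))
        * Nat.card (Submodule.torsionBy (PowerSeries ℤ_[p]) M' f)
      = Nat.card (M' ⧸ (Ideal.span {f} • (⊤ : Submodule (PowerSeries ℤ_[p]) M')))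
        * Nat.card (Submodule.torsionBy (PowerSeries ℤ_[p]) M f) :=
  stmt19_general p M M' f φ hker hcoker h₂
end
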